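/- arXiv:0904.1824 — 2 statements merged into one kernel-verified Lean document; each statement's English description precedes it below -/
import Mathlib

section
/- If H is a Borel subset with compact closure of a locally compact abelian group G and H covers G with Λ ⊆ G, i.e. H+Λ contains μ-almost all points of G, then the uniform asymptotic upper density D̄#(Λ) is at least 1/μ(H). -/
open MeasureTheory ENNReal Pointwise

lemma card_le_count {α : Type*} [MeasurableSpace α] {T : Set α} (hT : T.Finite) :
    (hT.toFinset.card : ℝ≥0∞) ≤ Measure.count T := by
  refine le_trans ?_ Measure.le_count_apply
  haveI := hT.fintype
  rw [tsum_fintype]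
  simp [Set.Finite.card_toFinset]

lemma exists_pow_mul_lt_one (t : ℝ≥0∞) (ht : t < 1) (k : ℕ) :
    ∃ m : ℕ, t ^ m * ((3 * m + 1 : ℕ) : ℝ≥0∞) ^ k < 1 := by
  rcases eq_or_ne t 0 with rfl | ht0
  · exact ⟨1, by simp⟩
  · set r : NNReal := t.toNNReal with hrdef
    have htr : t = (r : ℝ≥0∞) := (ENNReal.coe_toNNReal ht.ne_top).symm
    have hr1' : (r : ℝ≥0∞) < 1 := htr ▸ ht
    have hr1 : (r : ℝ) < 1 := by exact_mod_cast hr1'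
    have hrnn : (0:ℝ) ≤ (r:ℝ) := r.2
    have hsum : Summable (fun n : ℕ => (n : ℝ) ^ k * (r:ℝ) ^ n) :=
      summable_pow_mul_geometric_of_norm_lt_one k (by rwa [Real.norm_eq_abs, abs_of_nonneg hrnn])
    have htend := hsum.tendsto_atTop_zero
    have hpos : (0:ℝ) < 1 / 4 ^ k := by positivity
    have hev := (htend.eventually (gt_mem_nhds hpos)).and (Filter.eventually_ge_atTop 1)
    obtain ⟨m, hm, hm1⟩ := hev.exists
    refine ⟨m, ?_⟩
    have hreal : ((3 * m + 1 : ℕ) : ℝ) ^ k * (r:ℝ) ^ m < 1 := by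
      have h34 : ((3 * m + 1 : ℕ) : ℝ) ≤ 4 * (m : ℝ) := by
        push_cast
        have : (1:ℝ) ≤ (m:ℝ) := by exact_mod_cast hm1
        linarith
      have hb : ((3 * m + 1 : ℕ) : ℝ) ^ k ≤ (4:ℝ) ^ k * (m:ℝ) ^ k := by
        rw [← mul_pow]
        exact pow_le_pow_left₀ (by positivity) h34 k
      have hrm : (0:ℝ) ≤ (r:ℝ) ^ m := by positivity
      calc ((3 * m + 1 : ℕ) : ℝ) ^ k * (r:ℝ) ^ m
          ≤ ((4:ℝ) ^ k * (m:ℝ) ^ k) * (r:ℝ) ^ m := mul_le_mul_of_nonneg_right hb hrm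
        _ = (4:ℝ) ^ k * ((m:ℝ) ^ k * (r:ℝ) ^ m) := by ring
        _ < (4:ℝ) ^ k * (1 / 4 ^ k) := mul_lt_mul_of_pos_left hm (by positivity)
        _ = 1 := by field_simp
    rw [htr]
    have hcoe : ((r : ℝ≥0∞)) ^ m * ((3 * m + 1 : ℕ) : ℝ≥0∞) ^ k
        = (((r ^ m * (3 * m + 1 : ℕ) ^ k : NNReal)) : ℝ≥0∞) := by
      push_cast
      ring
    rw [hcoe]
    rw [show (1:ℝ≥0∞) = ((1:NNReal):ℝ≥0∞) from rfl, ENNReal.coe_lt_coe]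
    rw [← NNReal.coe_lt_coe]
    push_cast
    push_cast at hreal
    nlinarith [hreal, pow_nonneg hrnn m, pow_nonneg (by positivity : (0:ℝ) ≤ 3*(m:ℝ)+1) k]

/-- Uniform asymptotic upper density of the counting measure of `Λ` with respect to `μ`. -/
noncomputable def uaudCount {G : Type*} [TopologicalSpace G] [AddCommGroup G]
    [MeasurableSpace G] (μ : Measure G) (Λ : Set G) : ℝ≥0∞ :=
  ⨅ (C : Set G) (_ : IsCompact C),
    ⨆ (V : Set G) (_ : MeasurableSet V) (_ : IsCompact (closure V)),
      Measure.count (Λ ∩ V) / μ (C + V)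

theorem covering_implies_density_lower_bound
    {G : Type*} [TopologicalSpace G] [AddCommGroup G] [IsTopologicalAddGroup G]
    [LocallyCompactSpace G] [MeasurableSpace G] [BorelSpace G]
    (μ : Measure G) [μ.IsAddHaarMeasure]
    (H Λ : Set G) (hH : MeasurableSet H) (hHc : IsCompact (closure H))
    (hcover : μ (Set.univ \ (H + Λ)) = 0) :
    1 / μ H ≤ uaudCount μ Λ := by
  classical
  unfold uaudCount
  refine le_iInf fun C => le_iInf fun hC => ?_
  set S := ⨆ (V : Set G) (_ : MeasurableSet V) (_ : IsCompact (closure V)),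
      Measure.count (Λ ∩ V) / μ (C + V) with hSdef
  by_contra hcon'
  rw [not_le] at hcon'
  -- basic compact neighborhood material
  obtain ⟨K₀, hK₀c, hK₀n⟩ := exists_compact_mem_nhds (0 : G)
  have h0K₀ : (0:G) ∈ K₀ := mem_of_mem_nhds hK₀n
  set U₁ : Set G := K₀ + -K₀ with hU₁def
  have hU₁c : IsCompact U₁ := hK₀c.add hK₀c.neg
  have h0U₁ : (0:G) ∈ U₁ := by
    have := Set.add_mem_add h0K₀ (Set.neg_mem_neg.2 h0K₀)
    simpa using this
  set O : Set G := interior K₀ + -K₀ with hOdef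
  have hOopen : IsOpen O := isOpen_interior.add_right
  have h0O : (0:G) ∈ O := by
    have := Set.add_mem_add (mem_interior_iff_mem_nhds.2 hK₀n) (Set.neg_mem_neg.2 h0K₀)
    simpa using this
  have hOU₁ : O ⊆ U₁ := Set.add_subset_add_right interior_subset
  -- closure of any set is contained in s + U₁
  have hL1 : ∀ s : Set G, closure s ⊆ s + U₁ := by
    intro s x hx
    have hxnhds : {x} + O ∈ nhds x := by
      refine (hOopen.add_left).mem_nhds ?_
      have := Set.add_mem_add (Set.mem_singleton x) h0O
      simpa using this
    obtain ⟨y, hy⟩ := mem_closure_iff_nhds.1 hx ({x} + O) hxnhds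
    obtain ⟨⟨x', hx', w, hw, hxy⟩, hys⟩ := hy
    have hxy' : x' + w = y := hxy
    rw [Set.mem_singleton_iff] at hx'
    subst hx'
    obtain ⟨u, hu, nv, hnv, huv⟩ := hw
    have huv' : u + nv = w := huv
    have hvK : -nv ∈ K₀ := Set.mem_neg.1 hnv
    refine ⟨y, hys, -w, ?_, by rw [← hxy']; exact add_neg_cancel_right x' w⟩
    have hweq : -w = -nv + -u := by rw [← huv']; abel
    rw [hweq]
    exact Set.add_mem_add hvK (Set.neg_mem_neg.2 (interior_subset hu))
  set U₂ : Set G := closure U₁ with hU₂def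
  have hU₂c : IsCompact U₂ := IsCompact.of_isClosed_subset (hU₁c.add hU₁c) isClosed_closure (hL1 U₁)
  have hU₂m : MeasurableSet U₂ := isClosed_closure.measurableSet
  have h0U₂ : (0:G) ∈ U₂ := subset_closure h0U₁
  have hOU₂ : O ⊆ U₂ := hOU₁.trans subset_closure
  -- the master compact set D
  set D : Set G := U₂ ∪ ((C ∪ -C) ∪ (closure H ∪ -closure H)) with hDdef
  have hDc : IsCompact D := hU₂c.union ((hC.union hC.neg).union (hHc.union hHc.neg))
  have hU₂D : U₂ ⊆ D := Set.subset_union_left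
  have hU₁D : U₁ ⊆ D := subset_closure.trans hU₂D
  have h0D : (0:G) ∈ D := hU₂D h0U₂
  have hCD : C ⊆ D := fun x hx => Or.inr (Or.inl (Or.inl hx))
  have hnHD : -closure H ⊆ D := fun x hx => Or.inr (Or.inr (Or.inr hx))
  -- iterated sumsets
  set P : ℕ → Set G := fun n => U₂ + n • D with hPdef
  have hP0 : P 0 = U₂ := by
    show U₂ + 0 • D = U₂
    rw [zero_nsmul, add_zero]
  have hPsucc : ∀ n, P (n+1) = P n + D := by
    intro n
    show U₂ + (n+1) • D = (U₂ + n • D) + D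
    rw [succ_nsmul, add_assoc]
  have hPc : ∀ n, IsCompact (P n) := by
    intro n
    induction n with
    | zero => rw [hP0]; exact hU₂c
    | succ n ih => rw [hPsucc]; exact ih.add hDc
  have h0nD : ∀ n : ℕ, (0:G) ∈ n • D := by
    intro n
    induction n with
    | zero => rw [zero_nsmul]; exact rfl
    | succ n ih =>
        rw [succ_nsmul]
        have := Set.add_mem_add ih h0D
        simpa using this
  have hOP : ∀ n, O ⊆ P n := by
    intro n x hx
    have := Set.add_mem_add (hOU₂ hx) (h0nD n)
    simpa using this
  have hμO : 0 < μ O := hOopen.measure_pos μ ⟨0, h0O⟩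
  -- finite covering of U₂ + D by translates of O
  have hcov : U₂ + D ⊆ ⋃ x : G, ({x} + O) := by
    intro y hy
    refine Set.mem_iUnion.2 ⟨y, ?_⟩
    have := Set.add_mem_add (Set.mem_singleton y) h0O
    simpa using this
  obtain ⟨F, hF⟩ := (hU₂c.add hDc).elim_finite_subcover (fun x : G => {x} + O)
    (fun x => hOopen.add_left) hcov
  set k : ℕ := F.card with hkdef
  -- translation invariance helper
  have htrans : ∀ (a : G) (s : Set G), μ ({a} + s) = μ s := by
    intro a s
    have hset : {a} + s = (fun x => -a + x) ⁻¹' s := by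
      ext x
      constructor
      · rintro ⟨a', ha', y, hy, rfl⟩
        rw [Set.mem_singleton_iff] at ha'
        subst ha'
        simpa [neg_add_cancel_left] using hy
      · intro hxm
        exact ⟨a, rfl, -a + x, hxm, add_neg_cancel_left a x⟩
    rw [hset, measure_preimage_add]
  -- the multiset / polynomial growth bound
  set φ : (↥F → ℕ) → G := fun m => ∑ f : ↥F, m f • (f : G) with hφdef
  set Ω : ℕ → Finset (↥F → ℕ) := fun n => Fintype.piFinset fun _ => Finset.range (n+1) with hΩdef
  have hupd : ∀ (m : ↥F → ℕ) (f₀ : ↥F), φ (Function.update m f₀ (m f₀ + 1)) = φ m + (f₀ : G) := by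
    intro m f₀
    show (∑ f : ↥F, (Function.update m f₀ (m f₀ + 1)) f • (f:G)) = _
    have h1 : ∀ f : ↥F, (Function.update m f₀ (m f₀ + 1)) f • (f:G)
        = m f • (f:G) + (if f = f₀ then (f₀:G) else 0) := by
      intro f
      by_cases hf : f = f₀
      · subst hf; rw [Function.update_self, if_pos rfl, succ_nsmul]
      · rw [Function.update_of_ne hf, if_neg hf, add_zero]
    rw [Finset.sum_congr rfl (fun f _ => h1 f), Finset.sum_add_distrib]
    congr 1
    rw [Finset.sum_ite_eq' Finset.univ f₀ (fun _ => (f₀:G))]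
    simp
  have hincl : ∀ n, P n ⊆ ⋃ m ∈ Ω n, ({φ m} + U₂) := by
    intro n
    induction n with
    | zero =>
        rw [hP0]
        intro x hx
        have hmem : (fun _ : ↥F => 0) ∈ Ω 0 := by
          rw [hΩdef]
          refine Fintype.mem_piFinset.2 fun f => ?_
          simp
        have hφ0 : φ (fun _ : ↥F => 0) = 0 := by
          rw [hφdef]; simp
        refine Set.mem_biUnion hmem ?_
        rw [hφ0]
        have := Set.add_mem_add (Set.mem_singleton (0:G)) hx
        simpa using this
    | succ n ih =>
        intro x hx
        rw [hPsucc n] at hx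
        obtain ⟨y, hy, d, hd, rfl⟩ := hx
        obtain ⟨m, hmΩ, hyin⟩ := Set.mem_iUnion₂.1 (ih hy)
        obtain ⟨ym, hym, u, hu, rfl⟩ := hyin
        rw [Set.mem_singleton_iff] at hym
        subst hym
        have hud : u + d ∈ U₂ + D := Set.add_mem_add hu hd
        obtain ⟨z, hzF, hzmem⟩ := Set.mem_iUnion₂.1 (hF hud)
        obtain ⟨z', hz', o, ho, hzo⟩ := hzmem
        have hzo' : z' + o = u + d := hzo
        rw [Set.mem_singleton_iff] at hz'
        rw [hz'] at hzo'
        set f₀ : ↥F := ⟨z, hzF⟩ with hf₀def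
        set m' := Function.update m f₀ (m f₀ + 1) with hm'def
        have hm'Ω : m' ∈ Ω (n+1) := by
          rw [hΩdef]
          refine Fintype.mem_piFinset.2 fun f => ?_
          rw [Finset.mem_range]
          by_cases hf : f = f₀
          · subst hf
            rw [hm'def, Function.update_self]
            have := Finset.mem_range.1 (Fintype.mem_piFinset.1 hmΩ f₀)
            omega
          · rw [hm'def, Function.update_of_ne hf]
            have := Finset.mem_range.1 (Fintype.mem_piFinset.1 hmΩ f)
            omega
        have hφm' : φ m' = φ m + z := hupd m f₀
        have heq : φ m' + o = (φ m + u) + d := by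
          rw [hφm', add_assoc, hzo', ← add_assoc]
        refine Set.mem_biUnion hm'Ω ?_
        have hmem : φ m' + o ∈ {φ m'} + U₂ :=
          Set.add_mem_add (Set.mem_singleton (φ m')) (hOU₂ ho)
        rw [heq] at hmem
        exact hmem
  have hΩcard : ∀ n, ((Ω n).card : ℝ≥0∞) = ((n+1 : ℕ) : ℝ≥0∞) ^ k := by
    intro n
    have hcard : (Ω n).card = (n+1)^k := by
      rw [hΩdef, hkdef]
      simp [Fintype.card_piFinset]
    rw [hcard]
    push_cast
    ring
  have hgrow : ∀ n, μ (P n) ≤ ((n+1 : ℕ) : ℝ≥0∞) ^ k * μ U₂ := by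
    intro n
    calc μ (P n) ≤ μ (⋃ m ∈ Ω n, ({φ m} + U₂)) := measure_mono (hincl n)
      _ ≤ ∑ m ∈ Ω n, μ ({φ m} + U₂) := measure_biUnion_finset_le _ _
      _ = ∑ m ∈ Ω n, μ U₂ := Finset.sum_congr rfl (fun m _ => htrans (φ m) U₂)
      _ = (Ω n).card • μ U₂ := Finset.sum_const _
      _ = ((n+1 : ℕ) : ℝ≥0∞) ^ k * μ U₂ := by rw [nsmul_eq_mul, hΩcard n]
  -- density constants
  have hμH_fin : μ H ≠ ⊤ := ((measure_mono subset_closure).trans_lt hHc.measure_lt_top).ne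
  have hS_ne_top : S ≠ ⊤ := hcon'.ne_top
  set t : ℝ≥0∞ := μ H * S with htdef
  have ht1 : t < 1 := by
    rcases eq_or_ne (μ H) 0 with h0 | h0
    · rw [htdef, h0, zero_mul]; exact zero_lt_one
    · have hlt : S < (μ H)⁻¹ := by rwa [one_div] at hcon'
      calc t = μ H * S := htdef
        _ < μ H * (μ H)⁻¹ := ENNReal.mul_lt_mul_right h0 hμH_fin hlt
        _ = 1 := ENNReal.mul_inv_cancel h0 hμH_fin
  -- the key recursive estimate
  have hkey : ∀ n, μ (P n) ≤ t * μ (P (n+3)) := by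
    intro n
    set V : Set G := closure (P n + -closure H) with hVdef
    have hVm : MeasurableSet V := isClosed_closure.measurableSet
    have hVsub2 : V ⊆ P (n+2) := by
      have h1 : V ⊆ (P n + -closure H) + U₁ := hL1 _
      have h2 : (P n + -closure H) + U₁ ⊆ (P n + D) + D :=
        Set.add_subset_add (Set.add_subset_add_left hnHD) hU₁D
      rw [hPsucc (n+1), hPsucc n]
      exact h1.trans h2
    have hVc : IsCompact V := IsCompact.of_isClosed_subset (hPc (n+2)) isClosed_closure hVsub2
    have hVcl : IsCompact (closure V) := by
      rw [hVdef, closure_closure]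
      exact hVc
    have hCV : C + V ⊆ P (n+3) := by
      have h1 : C + V ⊆ D + P (n+2) := Set.add_subset_add hCD hVsub2
      rw [hPsucc (n+2)]
      rw [add_comm (P (n+2)) D] at *
      exact h1
    have hm_ne_top : μ (C + V) ≠ ⊤ :=
      ((measure_mono hCV).trans_lt (hPc (n+3)).measure_lt_top).ne
    have hratio : Measure.count (Λ ∩ V) / μ (C + V) ≤ S := by
      rw [hSdef]
      exact le_iSup_of_le V (le_iSup_of_le hVm (le_iSup_of_le hVcl (le_refl _)))
    have hc_ne_top : Measure.count (Λ ∩ V) ≠ ⊤ := by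
      intro hceq
      rw [hceq] at hratio
      rw [ENNReal.top_div_of_ne_top hm_ne_top] at hratio
      exact hS_ne_top (top_le_iff.1 hratio)
    have hfin : (Λ ∩ V).Finite := by
      by_contra hf
      exact hc_ne_top (Measure.count_apply_infinite hf)
    set T : Set G := Λ ∩ (P n + -closure H) with hTdef
    have hTsub : T ⊆ Λ ∩ V := Set.inter_subset_inter Set.Subset.rfl subset_closure
    have hTfin : T.Finite := hfin.subset hTsub
    have hcount_T : (hTfin.toFinset.card : ℝ≥0∞) ≤ Measure.count (Λ ∩ V) :=
      (card_le_count hTfin).trans (measure_mono hTsub)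
    -- covering estimate
    have hcover_n : μ (P n) ≤ μ H * Measure.count (Λ ∩ V) := by
      have hsplit : P n ⊆ (⋃ x ∈ hTfin.toFinset, ({x} + H)) ∪ (Set.univ \ (H + Λ)) := by
        intro x hx
        by_cases hxH : x ∈ H + Λ
        · left
          obtain ⟨η, hη, lam, hlam, hsum⟩ := hxH
          have hsum' : η + lam = x := hsum
          have hlamT : lam ∈ hTfin.toFinset := by
            rw [Set.Finite.mem_toFinset]
            refine ⟨hlam, ?_⟩
            have hlameq : lam = x + -η := by rw [← hsum']; abel
            rw [hlameq]
            exact Set.add_mem_add hx (Set.neg_mem_neg.2 (subset_closure hη))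
          refine Set.mem_biUnion hlamT ?_
          exact ⟨lam, rfl, η, hη, by rw [← hsum']; abel⟩
        · exact Or.inr ⟨trivial, hxH⟩
      calc μ (P n) ≤ μ ((⋃ x ∈ hTfin.toFinset, ({x} + H)) ∪ (Set.univ \ (H + Λ))) :=
            measure_mono hsplit
        _ ≤ μ (⋃ x ∈ hTfin.toFinset, ({x} + H)) + μ (Set.univ \ (H + Λ)) :=
            measure_union_le _ _
        _ = μ (⋃ x ∈ hTfin.toFinset, ({x} + H)) := by rw [hcover, add_zero]
        _ ≤ ∑ x ∈ hTfin.toFinset, μ ({x} + H) := measure_biUnion_finset_le _ _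
        _ = ∑ x ∈ hTfin.toFinset, μ H := Finset.sum_congr rfl (fun x _ => htrans x H)
        _ = hTfin.toFinset.card • μ H := Finset.sum_const _
        _ = (hTfin.toFinset.card : ℝ≥0∞) * μ H := by rw [nsmul_eq_mul]
        _ ≤ Measure.count (Λ ∩ V) * μ H := mul_le_mul_left hcount_T _
        _ = μ H * Measure.count (Λ ∩ V) := mul_comm _ _
    -- packing estimate
    have hcle : Measure.count (Λ ∩ V) ≤ S * μ (C + V) := by
      rcases eq_or_ne (μ (C + V)) 0 with hm0 | hm0
      · rcases eq_or_ne (Measure.count (Λ ∩ V)) 0 with hc0 | hc0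
        · rw [hc0]; exact zero_le
        · exfalso
          rw [hm0, ENNReal.div_zero hc0] at hratio
          exact hS_ne_top (top_le_iff.1 hratio)
      · exact (ENNReal.div_le_iff hm0 hm_ne_top).1 hratio
    calc μ (P n) ≤ μ H * Measure.count (Λ ∩ V) := hcover_n
      _ ≤ μ H * (S * μ (C + V)) := mul_le_mul_right hcle _
      _ ≤ μ H * (S * μ (P (n+3))) := mul_le_mul_right (mul_le_mul_right (measure_mono hCV) _) _
      _ = t * μ (P (n+3)) := by rw [htdef, mul_assoc]
  -- iterate
  have hiter : ∀ m, μ (P 0) ≤ t ^ m * μ (P (3*m)) := by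
    intro m
    induction m with
    | zero => simp
    | succ m ih =>
        have h3 : 3*(m+1) = 3*m+3 := by ring
        calc μ (P 0) ≤ t ^ m * μ (P (3*m)) := ih
          _ ≤ t ^ m * (t * μ (P (3*m+3))) := mul_le_mul_right (hkey (3*m)) _
          _ = t ^ (m+1) * μ (P (3*(m+1))) := by rw [← mul_assoc, ← pow_succ, h3]
  -- contradiction
  obtain ⟨m, hm⟩ := exists_pow_mul_lt_one t ht1 k
  have hB0 : μ U₂ ≠ 0 := (hμO.trans_le (measure_mono hOU₂)).ne'
  have hBt : μ U₂ ≠ ⊤ := hU₂c.measure_lt_top.ne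
  have hfinal : μ U₂ < μ U₂ := by
    calc μ U₂ = μ (P 0) := by rw [hP0]
      _ ≤ t ^ m * μ (P (3*m)) := hiter m
      _ ≤ t ^ m * (((3*m+1 : ℕ) : ℝ≥0∞) ^ k * μ U₂) := mul_le_mul_right (hgrow (3*m)) _
      _ = (t ^ m * ((3*m+1 : ℕ) : ℝ≥0∞) ^ k) * μ U₂ := by rw [mul_assoc]
      _ < 1 * μ U₂ := ENNReal.mul_lt_mul_left hB0 hBt hm
      _ = μ U₂ := one_mul _
  exact lt_irrefl _ hfinal
end

section
/- In G = ℤ², with G' = ℤ×{0} and A = {(k,l) : k ∈ ℕ, l ≥ k}, the trace measure ν = μ_A of the counting measure on A has uniform asymptotic upper density D̄(ν;μ) = 1, yet for every x ∈ ℤ² the restriction of the translated measure ν_x to G' has uniform asymptotic upper density 0 in G'. -/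
open Pointwise ENNReal NNReal Filter

/-- Uniform asymptotic upper density in `ℤ × ℤ` (counting Haar measure) of a set-function `ν`,
restricted to subsets of `S`: inf over finite `C ⊆ S` of sup over finite `V ⊆ S` of
`ν(V)/#(C+V)`. -/
noncomputable def uaudOn (S : Set (ℤ × ℤ)) (ν : Set (ℤ × ℤ) → ℝ≥0∞) : ℝ≥0∞ :=
  ⨅ (C : Finset (ℤ × ℤ)) (_ : (C : Set (ℤ × ℤ)) ⊆ S),
    ⨆ (V : Finset (ℤ × ℤ)) (_ : (V : Set (ℤ × ℤ)) ⊆ S),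
      ν (V : Set (ℤ × ℤ)) / ((C + V).card : ℝ≥0∞)

private lemma aux_tendsto (d : ℕ) :
    Tendsto (fun n : ℕ => ((n : ℝ) + 1) ^ 2 / ((n : ℝ) + 2 * d + 1) ^ 2) atTop (nhds 1) := by
  have hden : Tendsto (fun n : ℕ => (n : ℝ) + 2 * d + 1) atTop atTop := by
    have h := tendsto_natCast_atTop_atTop (R := ℝ)
    have h2 : Tendsto (fun n : ℕ => (n : ℝ) + 2 * (d : ℝ)) atTop atTop :=
      tendsto_atTop_add_const_right atTop (2 * (d : ℝ)) h
    exact tendsto_atTop_add_const_right atTop (1 : ℝ) h2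
  have h0 : Tendsto (fun n : ℕ => (2 * (d : ℝ)) / ((n : ℝ) + 2 * d + 1)) atTop (nhds 0) :=
    Tendsto.div_atTop tendsto_const_nhds hden
  have h1 : Tendsto (fun n : ℕ => ((n : ℝ) + 1) / ((n : ℝ) + 2 * d + 1)) atTop (nhds 1) := by
    have heq : ∀ n : ℕ, ((n : ℝ) + 1) / ((n : ℝ) + 2 * d + 1)
        = 1 - (2 * (d : ℝ)) / ((n : ℝ) + 2 * d + 1) := by
      intro n
      have hne : (n : ℝ) + 2 * d + 1 ≠ 0 := by positivity
      field_simp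
      ring
    simp only [heq]
    simpa using tendsto_const_nhds.sub h0
  have := h1.pow 2
  simpa [div_pow] using this

theorem density_not_inherited_on_cosets :
    let A : Set (ℤ × ℤ) := {p | 0 ≤ p.1 ∧ p.1 ≤ p.2}
    let ν : Set (ℤ × ℤ) → ℝ≥0∞ := fun H => (H ∩ A).encard
    let G' : Set (ℤ × ℤ) := {p | p.2 = 0}
    uaudOn Set.univ ν = 1 ∧
      ∀ x : ℤ × ℤ, uaudOn G' (fun Z => ν ((fun z => z + x) '' Z)) = 0 := by
  intro A ν G'
  constructor
  · -- density 1 on the whole group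
    apply le_antisymm
    · -- ≤ 1 : take C = {0}
      refine iInf₂_le_of_le ({(0, 0)} : Finset (ℤ × ℤ)) (by simp) ?_
      refine iSup₂_le fun V _ => ?_
      have hadd : ({((0 : ℤ), (0 : ℤ))} : Finset (ℤ × ℤ)) + V = V := by
        rw [show ({((0 : ℤ), (0 : ℤ))} : Finset (ℤ × ℤ)) = 0 from rfl, zero_add]
      rw [hadd]
      have h1 : ((V : Set (ℤ × ℤ)) ∩ A).encard ≤ (V.card : ℕ∞) := by
        rw [← Set.encard_coe_eq_coe_finsetCard]
        exact Set.encard_mono Set.inter_subset_left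
      have hν : ν (V : Set (ℤ × ℤ)) ≤ (V.card : ℝ≥0∞) := by
        simpa using ENat.toENNReal_le.2 h1
      exact ENNReal.div_le_of_le_mul (by simpa using hν)
    · -- ≥ 1
      refine le_iInf₂ fun C _ => ?_
      set d : ℕ := C.sup fun p => max p.1.natAbs p.2.natAbs with hd
      have hCd : ∀ p ∈ C, p.1.natAbs ≤ d ∧ p.2.natAbs ≤ d := by
        intro p hp
        have := Finset.le_sup (f := fun p : ℤ × ℤ => max p.1.natAbs p.2.natAbs) hp
        exact ⟨le_trans (le_max_left _ _) this, le_trans (le_max_right _ _) this⟩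
      set V : ℕ → Finset (ℤ × ℤ) :=
        fun n => Finset.Icc (0 : ℤ) n ×ˢ Finset.Icc (n : ℤ) (2 * n) with hV
      have hVcard : ∀ n, (V n).card = (n + 1) ^ 2 := by
        intro n
        have e1 : (Finset.Icc (0 : ℤ) (n : ℤ)).card = n + 1 := by rw [Int.card_Icc]; omega
        have e2 : (Finset.Icc (n : ℤ) (2 * n)).card = n + 1 := by rw [Int.card_Icc]; omega
        simp [hV, Finset.card_product, e1, e2, pow_two]
      have hνV : ∀ n, ν ((V n : Set (ℤ × ℤ))) = (((n + 1) ^ 2 : ℕ) : ℝ≥0∞) := by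
        intro n
        have hsub : (V n : Set (ℤ × ℤ)) ∩ A = (V n : Set (ℤ × ℤ)) := by
          apply Set.inter_eq_self_of_subset_left
          intro p hp
          simp only [hV, Finset.coe_product, Set.mem_prod, Finset.coe_Icc, Set.mem_Icc] at hp
          exact ⟨hp.1.1, le_trans hp.1.2 (by omega)⟩
        show ((((V n : Set (ℤ × ℤ)) ∩ A).encard : ℕ∞) : ℝ≥0∞) = _
        rw [hsub, Set.encard_coe_eq_coe_finsetCard, hVcard n]
        simp
      have hcard : ∀ n, (C + V n).card ≤ (n + 2 * d + 1) ^ 2 := by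
        intro n
        have hsub : C + V n ⊆
            Finset.Icc (-(d : ℤ)) ((n : ℤ) + d) ×ˢ Finset.Icc ((n : ℤ) - d) (2 * n + d) := by
          intro p hp
          rw [Finset.mem_add] at hp
          obtain ⟨c, hc, v, hv, rfl⟩ := hp
          obtain ⟨h1, h2⟩ := hCd c hc
          simp only [hV, Finset.mem_product, Finset.mem_Icc] at hv
          simp only [Finset.mem_product, Finset.mem_Icc, Prod.fst_add, Prod.snd_add]
          omega
        calc (C + V n).card ≤ _ := Finset.card_le_card hsub
          _ ≤ (n + 2 * d + 1) ^ 2 := by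
            simp only [Finset.card_product, Int.card_Icc]
            rw [pow_two]
            have e1 : ((n : ℤ) + d + 1 - -(d : ℤ)).toNat = n + 2 * d + 1 := by omega
            have e2 : (2 * (n : ℤ) + d + 1 - ((n : ℤ) - d)).toNat = n + 2 * d + 1 := by omega
            rw [e1, e2]
      have key : ∀ n : ℕ,
          (((n + 1) ^ 2 : ℕ) : ℝ≥0∞) / (((n + 2 * d + 1) ^ 2 : ℕ) : ℝ≥0∞) ≤
            ⨆ (W : Finset (ℤ × ℤ)) (_ : (W : Set (ℤ × ℤ)) ⊆ Set.univ),
              ν (W : Set (ℤ × ℤ)) / ((C + W).card : ℝ≥0∞) := by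
        intro n
        refine le_iSup₂_of_le (V n) (Set.subset_univ _) ?_
        rw [hνV n]
        exact ENNReal.div_le_div le_rfl (Nat.cast_le.2 (hcard n))
      have htends : Tendsto (fun n : ℕ =>
          (((n + 1) ^ 2 : ℕ) : ℝ≥0∞) / (((n + 2 * d + 1) ^ 2 : ℕ) : ℝ≥0∞)) atTop (nhds 1) := by
        have heq : ∀ n : ℕ, (((n + 1) ^ 2 : ℕ) : ℝ≥0∞) / (((n + 2 * d + 1) ^ 2 : ℕ) : ℝ≥0∞)
            = ENNReal.ofReal (((n : ℝ) + 1) ^ 2 / ((n : ℝ) + 2 * d + 1) ^ 2) := by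
          intro n
          rw [ENNReal.ofReal_div_of_pos (by positivity)]
          congr 1
          · rw [← ENNReal.ofReal_natCast ((n + 1) ^ 2)]
            congr 1
            push_cast
            ring
          · rw [← ENNReal.ofReal_natCast ((n + 2 * d + 1) ^ 2)]
            congr 1
            push_cast
            ring
        simp only [heq]
        have := ENNReal.tendsto_ofReal (aux_tendsto d)
        simpa using this
      exact le_of_tendsto' htends key
  · -- density 0 on the line
    intro x
    apply le_antisymm _ (zero_le)
    refine ENNReal.le_of_forall_pos_le_add fun ε hε _ => ?_
    rw [zero_add]
    set M : ℕ := (x.2 + 1).toNat with hM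
    obtain ⟨m, hm⟩ := exists_nat_gt ((M : ℝ≥0) / ε)
    have hMε : (M : ℝ≥0∞) ≤ (ε : ℝ≥0∞) * ((m : ℝ≥0∞) + 1) := by
      have hle : (M : ℝ≥0) ≤ ε * ((m : ℝ≥0) + 1) := by
        have h1 : (M : ℝ≥0) / ε ≤ (m : ℝ≥0) := le_of_lt hm
        calc (M : ℝ≥0) = (M : ℝ≥0) / ε * ε := by
              rw [div_mul_cancel₀]
              exact ne_of_gt hε
          _ ≤ (m : ℝ≥0) * ε := mul_le_mul_left h1 ε
          _ ≤ ε * ((m : ℝ≥0) + 1) := by rw [mul_comm]; exact mul_le_mul_right (by simp) ε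
      calc (M : ℝ≥0∞) = ((M : ℝ≥0) : ℝ≥0∞) := by norm_cast
        _ ≤ ((ε * ((m : ℝ≥0) + 1)) : ℝ≥0) := ENNReal.coe_le_coe.2 hle
        _ = (ε : ℝ≥0∞) * ((m : ℝ≥0∞) + 1) := by push_cast; ring
    set C : Finset (ℤ × ℤ) := Finset.Icc (0 : ℤ) m ×ˢ ({0} : Finset ℤ) with hC
    have hCG : (C : Set (ℤ × ℤ)) ⊆ G' := by
      intro p hp
      simp only [hC, Finset.coe_product, Set.mem_prod, Finset.coe_singleton,
        Set.mem_singleton_iff] at hp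
      exact hp.2
    have hCcard : C.card = m + 1 := by
      simp only [hC, Finset.card_product, Int.card_Icc, Finset.card_singleton]
      omega
    refine iInf₂_le_of_le C hCG ?_
    refine iSup₂_le fun W hW => ?_
    rcases W.eq_empty_or_nonempty with rfl | hWne
    · have h0 : ν ((fun z => z + x) '' ((∅ : Finset (ℤ × ℤ)) : Set (ℤ × ℤ))) = 0 := by
        show ((((fun z => z + x) '' ((∅ : Finset (ℤ × ℤ)) : Set (ℤ × ℤ)) ∩ A).encard : ℕ∞) :
          ℝ≥0∞) = 0
        simp
      show ν ((fun z => z + x) '' ((∅ : Finset (ℤ × ℤ)) : Set (ℤ × ℤ))) /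
        (((C + ∅).card : ℕ) : ℝ≥0∞) ≤ (ε : ℝ≥0∞)
      rw [h0]
      simp
    · have hν : ν ((fun z => z + x) '' (W : Set (ℤ × ℤ))) ≤ (M : ℝ≥0∞) := by
        have hsub : (fun z => z + x) '' (W : Set (ℤ × ℤ)) ∩ A ⊆
            ((Finset.Icc (0 : ℤ) x.2 ×ˢ ({x.2} : Finset ℤ) : Finset (ℤ × ℤ)) : Set (ℤ × ℤ)) := by
          rintro p ⟨⟨w, hw, rfl⟩, hpA⟩
          have hw2 : w.2 = 0 := hW hw
          simp only [Finset.coe_product, Set.mem_prod, Finset.coe_Icc, Set.mem_Icc,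
            Finset.coe_singleton, Set.mem_singleton_iff]
          obtain ⟨h1, h2⟩ := hpA
          simp only [Prod.fst_add, Prod.snd_add] at h1 h2 ⊢
          omega
        have h1 : ((fun z => z + x) '' (W : Set (ℤ × ℤ)) ∩ A).encard ≤
            ((M : ℕ) : ℕ∞) := by
          refine le_trans (Set.encard_mono hsub) ?_
          rw [Set.encard_coe_eq_coe_finsetCard]
          refine Nat.cast_le.2 ?_
          simp only [Finset.card_product, Int.card_Icc, Finset.card_singleton, hM]
          omega
        show ((((fun z => z + x) '' (W : Set (ℤ × ℤ)) ∩ A).encard : ℕ∞) : ℝ≥0∞) ≤ _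
        calc _ ≤ (((M : ℕ) : ℕ∞) : ℝ≥0∞) := ENat.toENNReal_le.2 h1
          _ = (M : ℝ≥0∞) := by simp
      have hcard : ((m : ℝ≥0∞) + 1) ≤ ((C + W).card : ℝ≥0∞) := by
        have h := Finset.card_le_card_add_right hWne (s := C)
        rw [hCcard] at h
        calc (m : ℝ≥0∞) + 1 = ((m + 1 : ℕ) : ℝ≥0∞) := by push_cast; ring
          _ ≤ _ := Nat.cast_le.2 h
      calc ν ((fun z => z + x) '' (W : Set (ℤ × ℤ))) / ((C + W).card : ℝ≥0∞)
          ≤ (M : ℝ≥0∞) / ((m : ℝ≥0∞) + 1) := ENNReal.div_le_div hν hcard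
        _ ≤ (ε : ℝ≥0∞) := by
            rw [ENNReal.div_le_iff_le_mul (Or.inl (by simp)) (Or.inl (by simp))]
            exact hMε
end
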